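/- arXiv:2509.22219 — 2 statements merged into one kernel-verified Lean document; each statement's English description precedes it below -/
import Mathlib

section
/- Let n = 2M, A ∈ SO(n), λ ∈ ℝᴹ, and B = Aᵀ(⊕ᵢ λᵢ J)A. Let Ψ : ℝⁿ → ℝᵐ satisfy Ψ(exp(tB)·x) = Ψ(x) for all t ∈ ℝ and all x ∈ ℝⁿ. Then there exists φ : ℝⁿ → ℝᵐ such that for every x ∈ ℝⁿ with (Ax)₁ ≠ 0 and every t₀ valid for x, Ψ(x) = φ(invRep(x; t₀)). -/
open Matrix NormedSpace

noncomputable section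

/-- `R(t)`: the 2×2 rotation matrix. -/
def R2 (t : ℝ) : Matrix (Fin 2) (Fin 2) ℝ :=
  !![Real.cos t, -Real.sin t; Real.sin t, Real.cos t]

/-- `J`: the 2×2 matrix with rows (0, -1) and (1, 0). -/
def Jmat : Matrix (Fin 2) (Fin 2) ℝ := !![0, -1; 1, 0]

/-- Index type for `ℝⁿ` with `n = 2M`: component `2(i-1)+p` of block `i` is indexed `(p, i)`. -/
abbrev Idx (M : ℕ) := Fin 2 × Fin M

/-- `SO(n)` for `n = 2M`, on the block index type. -/
def SOb (M : ℕ) : Set (Matrix (Idx M) (Idx M) ℝ) :=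
  {A | Aᵀ * A = 1 ∧ A.det = 1}

/-- The block-diagonal matrix `⊕ᵢ Cᵢ`. -/
def bdiag {M : ℕ} (C : Fin M → Matrix (Fin 2) (Fin 2) ℝ) : Matrix (Idx M) (Idx M) ℝ :=
  Matrix.blockDiagonal C

/-- The `i`-th 2-dimensional block `vᵢ` of a vector `v ∈ ℝⁿ`. -/
def blk {M : ℕ} (v : Idx M → ℝ) (i : Fin M) : Fin 2 → ℝ := fun p => v (p, i)

/-- Concatenation `u₁ ⊕ ⋯ ⊕ u_M` of 2-dimensional blocks. -/
def cat {M : ℕ} (u : Fin M → (Fin 2 → ℝ)) : Idx M → ℝ := fun pi => u pi.2 pi.1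

/-- `e₁ = (1, 0) ∈ ℝ²`. -/
def e1 : Fin 2 → ℝ := ![1, 0]

/-- The Euclidean norm `‖u‖₂` of `u ∈ ℝ²`. -/
def norm2 (u : Fin 2 → ℝ) : ℝ := Real.sqrt (u 0 ^ 2 + u 1 ^ 2)

/-- `t₀` is valid for `x` (w.r.t. `A`, `λ`): `R(t₀λ₁)e₁ = v₁/‖v₁‖₂` where `v = Ax`. -/
def valid {M : ℕ} [NeZero M] (A : Matrix (Idx M) (Idx M) ℝ) (lam : Fin M → ℝ)
    (x : Idx M → ℝ) (t₀ : ℝ) : Prop :=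
  (R2 (t₀ * lam 0)).mulVec e1 = (norm2 (blk (A.mulVec x) 0))⁻¹ • blk (A.mulVec x) 0

/-- `invRep(x; t₀) = ‖v₁‖₂ e₁ ⊕ R(−t₀λ₂)v₂ ⊕ ⋯ ⊕ R(−t₀λ_M)v_M`, where `v = Ax`. -/
def invRep {M : ℕ} [NeZero M] (A : Matrix (Idx M) (Idx M) ℝ) (lam : Fin M → ℝ)
    (x : Idx M → ℝ) (t₀ : ℝ) : Idx M → ℝ :=
  cat (fun i =>
    if i = 0 then norm2 (blk (A.mulVec x) 0) • e1
    else (R2 (-(t₀ * lam i))).mulVec (blk (A.mulVec x) i))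

/-! The generator `B` is conjugate, by the orthogonal `A`, to the block-diagonal matrix
`⊕ᵢ λᵢ J`, so its flow is `exp(tB) = Aᵀ (⊕ᵢ R(tλᵢ)) A`. Validity of `t₀` says exactly that
`R(-t₀λ₁)` turns `v₁` onto `‖v₁‖₂ e₁`, hence `invRep(x; t₀) = A exp(-t₀B) x`, and
`φ(y) := Ψ(Aᵀ y)` works by the invariance of `Ψ` under the flow. -/

lemma R2_neg_mul_self (s : ℝ) : R2 (-s) * R2 s = 1 := by
  ext i j
  fin_cases i <;> fin_cases j <;>
    simp [R2, Matrix.mul_apply, Fin.sum_univ_two] <;> nlinarith [Real.sin_sq_add_cos_sq s]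

lemma norm2_ne_zero {u : Fin 2 → ℝ} (hu : u ≠ 0) : norm2 u ≠ 0 := by
  obtain ⟨p, hp⟩ := Function.ne_iff.mp hu
  have : 0 < u 0 ^ 2 + u 1 ^ 2 := by fin_cases p <;> simp at hp <;> positivity
  exact (Real.sqrt_pos.mpr this).ne'

lemma R2_neg_mulVec_of_mulVec_e1 {s : ℝ} {v : Fin 2 → ℝ} (hv : v ≠ 0)
    (h : R2 s *ᵥ e1 = (norm2 v)⁻¹ • v) : R2 (-s) *ᵥ v = norm2 v • e1 := by
  have hv' : v = norm2 v • R2 s *ᵥ e1 := by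
    rw [h, smul_smul, mul_inv_cancel₀ (norm2_ne_zero hv), one_smul]
  conv_lhs => rw [hv']
  rw [mulVec_smul, mulVec_mulVec, R2_neg_mul_self, one_mulVec]

/-- `Jmat` is the matrix of multiplication by `i` on `ℂ = ℝ ⊕ ℝ i`, so `exp (a • Jmat)` is the
matrix of multiplication by `exp (a i) = cos a + i sin a`. -/
lemma exp_smul_Jmat (a : ℝ) : exp (a • Jmat) = R2 a := by
  let _ : NormedRing (Matrix (Fin 2) (Fin 2) ℝ) := Matrix.linftyOpNormedRing
  let _ : NormedAlgebra ℝ (Matrix (Fin 2) (Fin 2) ℝ) := Matrix.linftyOpNormedAlgebra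
  let f := Algebra.leftMulMatrix Complex.basisOneI
  have hf : f (a * Complex.I) = a • Jmat := by
    rw [Algebra.leftMulMatrix_complex]
    ext i j; fin_cases i <;> fin_cases j <;> simp [Jmat]
  rw [← hf]
  refine (map_exp f f.toLinearMap.continuous_of_finiteDimensional _).symm.trans ?_
  rw [← Complex.exp_eq_exp_ℂ, Algebra.leftMulMatrix_complex]
  ext i j; fin_cases i <;> fin_cases j <;>
    simp [R2, Complex.exp_ofReal_mul_I_re, Complex.exp_ofReal_mul_I_im]

lemma exp_bdiag_smul_Jmat {M : ℕ} (c : Fin M → ℝ) :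
    exp (bdiag fun i => c i • Jmat) = bdiag fun i => R2 (c i) := by
  let _ : NormedRing (Matrix (Fin 2) (Fin 2) ℝ) := Matrix.linftyOpNormedRing
  let _ : NormedAlgebra ℝ (Matrix (Fin 2) (Fin 2) ℝ) := Matrix.linftyOpNormedAlgebra
  let _ : NormedAlgebra ℚ (Matrix (Fin 2) (Fin 2) ℝ) := Matrix.linftyOpNormedAlgebra
  rw [bdiag, bdiag, Matrix.exp_blockDiagonal]
  exact congrArg blockDiagonal (funext fun i => (Pi.coe_exp _ i).trans (exp_smul_Jmat (c i)))

lemma exp_conj_of_transpose_mul_self {ι : Type*} [Fintype ι] [DecidableEq ι]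
    {A : Matrix ι ι ℝ} (hA : Aᵀ * A = 1) (D : Matrix ι ι ℝ) :
    exp (Aᵀ * D * A) = Aᵀ * exp D * A := by
  simpa only [Matrix.inv_eq_right_inv hA] using Matrix.exp_conj Aᵀ D (IsUnit.of_mul_eq_one A hA)

lemma exp_smul_conj_bdiag_smul_Jmat {M : ℕ} {A : Matrix (Idx M) (Idx M) ℝ} (hA : Aᵀ * A = 1)
    (lam : Fin M → ℝ) (t : ℝ) :
    exp (t • (Aᵀ * bdiag (fun i => lam i • Jmat) * A)) =
      Aᵀ * bdiag (fun i => R2 (t * lam i)) * A := by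
  have hsmul : t • (Aᵀ * bdiag (fun i => lam i • Jmat) * A) =
      Aᵀ * bdiag (fun i => (t * lam i) • Jmat) * A := by
    rw [← smul_mul_assoc, ← mul_smul_comm, bdiag, bdiag, ← blockDiagonal_smul]
    congr 3
    ext1 i
    rw [Pi.smul_apply, smul_smul]
  rw [hsmul, exp_conj_of_transpose_mul_self hA, exp_bdiag_smul_Jmat]

lemma bdiag_mulVec {M : ℕ} (C : Fin M → Matrix (Fin 2) (Fin 2) ℝ) (v : Idx M → ℝ) :
    bdiag C *ᵥ v = cat fun i => C i *ᵥ blk v i := by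
  ext ⟨p, i⟩
  simp [bdiag, cat, blk, mulVec, dotProduct, Fintype.sum_prod_type, blockDiagonal_apply,
    ite_mul, Fin.sum_univ_two]

lemma invRep_eq_bdiag_mulVec {M : ℕ} [NeZero M] {A : Matrix (Idx M) (Idx M) ℝ}
    {lam : Fin M → ℝ} {x : Idx M → ℝ} {t₀ : ℝ} (hx : blk (A *ᵥ x) 0 ≠ 0)
    (ht₀ : valid A lam x t₀) :
    invRep A lam x t₀ = bdiag (fun i => R2 (-t₀ * lam i)) *ᵥ (A *ᵥ x) := by
  rw [bdiag_mulVec, invRep]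
  congr 1
  ext1 i
  split_ifs with hi
  · rw [hi, neg_mul, R2_neg_mulVec_of_mulVec_e1 hx ht₀]
  · rw [neg_mul]

/-- If `Ψ(exp(tB)x) = Ψ(x)` for all `t, x`, then there is `φ : ℝⁿ → ℝᵐ`
with `Ψ(x) = φ(invRep(x; t₀))` for every `x` with `(Ax)₁ ≠ 0` and every valid `t₀`. -/
theorem stmt7 (M : ℕ) [NeZero M] (m : ℕ) (A : Matrix (Idx M) (Idx M) ℝ) (hA : A ∈ SOb M)
    (lam : Fin M → ℝ) (B : Matrix (Idx M) (Idx M) ℝ)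
    (hB : B = Aᵀ * bdiag (fun i => lam i • Jmat) * A)
    (Ψ : (Idx M → ℝ) → (Fin m → ℝ))
    (hΨ : ∀ (t : ℝ) (x : Idx M → ℝ), Ψ ((exp (t • B)).mulVec x) = Ψ x) :
    ∃ φ : (Idx M → ℝ) → (Fin m → ℝ),
      ∀ x : Idx M → ℝ, blk (A.mulVec x) 0 ≠ 0 →
        ∀ t₀ : ℝ, valid A lam x t₀ → Ψ x = φ (invRep A lam x t₀) := by
  subst hB
  refine ⟨fun y => Ψ (Aᵀ *ᵥ y), fun x hx t₀ ht₀ => ?_⟩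
  show Ψ x = Ψ (Aᵀ *ᵥ invRep A lam x t₀)
  rw [invRep_eq_bdiag_mulVec hx ht₀, mulVec_mulVec, mulVec_mulVec,
    ← exp_smul_conj_bdiag_smul_Jmat hA.1, hΨ]
end
end

section
/- Let n = 2M, let A be an invertible real n×n matrix, λ ∈ ℝᴹ with λ₁ ≠ 0, and L = A⁻¹(⊕ᵢ λᵢ N)A. Let x ∈ ℝⁿ with v = Ax satisfying v_{1,2} ≠ 0, and for s ∈ ℝ set x' = exp(sL)x and v' = Ax'. Then v'ᵢ = G(sλᵢ)vᵢ and v'_{i,2} = v_{i,2} for every i; in particular v'_{1,2} = v_{1,2} ≠ 0, v'_{1,1}/(λ₁·v'_{1,2}) = s + v_{1,1}/(λ₁·v_{1,2}), and invRep_p(x') = invRep_p(x). -/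
open Matrix NormedSpace

noncomputable section

/-- `H(t)`: the 2×2 hyperbolic rotation with rows (cosh t, sinh t), (sinh t, cosh t). -/
def Hyp (t : ℝ) : Matrix (Fin 2) (Fin 2) ℝ :=
  !![Real.cosh t, Real.sinh t; Real.sinh t, Real.cosh t]

/-- `G(t)`: the 2×2 shear with rows (1, t), (0, 1). -/
def Gm (t : ℝ) : Matrix (Fin 2) (Fin 2) ℝ := !![1, t; 0, 1]

/-- `K`: rows (0, 1), (1, 0). -/
def Kmat : Matrix (Fin 2) (Fin 2) ℝ := !![0, 1; 1, 0]

/-- `N`: rows (0, 1), (0, 0). -/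
def Nmat : Matrix (Fin 2) (Fin 2) ℝ := !![0, 1; 0, 0]

/-- `e₂ = (0, 1) ∈ ℝ²`. -/
def e2 : Fin 2 → ℝ := ![0, 1]

/-- The inverse hyperbolic tangent. -/
def artanh (x : ℝ) : ℝ := Real.log ((1 + x) / (1 - x)) / 2

/-- `t₀` is valid for `x` (elliptic case): `R(t₀λ₁)e₁ = v₁/‖v₁‖₂` where `v = Ax`. -/
def validE {M : ℕ} [NeZero M] (A : Matrix (Idx M) (Idx M) ℝ) (lam : Fin M → ℝ)
    (x : Idx M → ℝ) (t₀ : ℝ) : Prop :=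
  (R2 (t₀ * lam 0)).mulVec e1 = (norm2 (blk (A.mulVec x) 0))⁻¹ • blk (A.mulVec x) 0

/-- `invRep_e(x; t₀) = ‖v₁‖₂ e₁ ⊕ R(−t₀λ₂)v₂ ⊕ ⋯ ⊕ R(−t₀λ_M)v_M`, where `v = Ax`. -/
def invRepE {M : ℕ} [NeZero M] (A : Matrix (Idx M) (Idx M) ℝ) (lam : Fin M → ℝ)
    (x : Idx M → ℝ) (t₀ : ℝ) : Idx M → ℝ :=
  cat (fun i =>
    if i = 0 then norm2 (blk (A.mulVec x) 0) • e1
    else (R2 (-(t₀ * lam i))).mulVec (blk (A.mulVec x) i))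

/-- The hyperbolic parameter `t₀ = artanh(v_{1,2}/v_{1,1})/λ₁`, where `v = Ax`. -/
def t0H {M : ℕ} [NeZero M] (A : Matrix (Idx M) (Idx M) ℝ) (lam : Fin M → ℝ)
    (x : Idx M → ℝ) : ℝ :=
  artanh (blk (A.mulVec x) 0 1 / blk (A.mulVec x) 0 0) / lam 0

/-- `invRep_h(x) = sgn(v_{1,1})√(v_{1,1}² − v_{1,2}²) e₁ ⊕ H(−t₀λ₂)v₂ ⊕ ⋯`, `v = Ax`. -/
def invRepH {M : ℕ} [NeZero M] (A : Matrix (Idx M) (Idx M) ℝ) (lam : Fin M → ℝ)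
    (x : Idx M → ℝ) : Idx M → ℝ :=
  cat (fun i =>
    if i = 0 then
      (Real.sign (blk (A.mulVec x) 0 0) *
        Real.sqrt (blk (A.mulVec x) 0 0 ^ 2 - blk (A.mulVec x) 0 1 ^ 2)) • e1
    else (Hyp (-(t0H A lam x * lam i))).mulVec (blk (A.mulVec x) i))

/-- The parabolic parameter `t₀ = v_{1,1}/(λ₁ v_{1,2})`, where `v = Ax`. -/
def t0P {M : ℕ} [NeZero M] (A : Matrix (Idx M) (Idx M) ℝ) (lam : Fin M → ℝ)
    (x : Idx M → ℝ) : ℝ :=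
  blk (A.mulVec x) 0 0 / (lam 0 * blk (A.mulVec x) 0 1)

/-- `invRep_p(x) = v_{1,2} e₂ ⊕ G(−t₀λ₂)v₂ ⊕ ⋯ ⊕ G(−t₀λ_M)v_M`, where `v = Ax`. -/
def invRepP {M : ℕ} [NeZero M] (A : Matrix (Idx M) (Idx M) ℝ) (lam : Fin M → ℝ)
    (x : Idx M → ℝ) : Idx M → ℝ :=
  cat (fun i =>
    if i = 0 then blk (A.mulVec x) 0 1 • e2
    else (Gm (-(t0P A lam x * lam i))).mulVec (blk (A.mulVec x) i))

/-!
Since `N² = 0`, the matrix `s • L = A⁻¹ (⊕ᵢ sλᵢN) A` squares to zero, so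
`exp (s • L) = 1 + s • L = A⁻¹ (⊕ᵢ G(sλᵢ)) A`: in the coordinates `v = Ax` the flow is the
blockwise shear `vᵢ ↦ G(sλᵢ) vᵢ`. It fixes every second coordinate and shifts `t₀` by `s`,
and `G(-(s + t₀)λᵢ) G(sλᵢ) = G(-t₀λᵢ)`, so `invRep_p` is unchanged.
-/

theorem NormedSpace.exp_eq_one_add_of_sq_eq_zero {𝔸 : Type*} [Ring 𝔸] [Algebra ℚ 𝔸]
    [TopologicalSpace 𝔸] [IsTopologicalRing 𝔸] {a : 𝔸} (ha : a ^ 2 = 0) :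
    NormedSpace.exp a = 1 + a := by
  have hpow : ∀ k, 2 ≤ k → a ^ k = 0 := fun k hk => by
    rw [← Nat.add_sub_cancel' hk, pow_add, ha, zero_mul]
  rw [NormedSpace.exp_eq_tsum_rat]
  dsimp only
  rw [tsum_eq_sum (s := Finset.range 2)]
  · simp [Finset.sum_range_succ]
  · intro k hk
    rw [hpow k (by simp at hk; omega), smul_zero]

theorem Matrix.mul_exp_conj_of_sq_eq_zero {n 𝔸 : Type*} [Fintype n] [DecidableEq n]
    [NormedCommRing 𝔸] [NormedAlgebra ℚ 𝔸] [CompleteSpace 𝔸] {A D : Matrix n n 𝔸}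
    (hA : IsUnit A) (hD : D ^ 2 = 0) :
    A * NormedSpace.exp (A⁻¹ * D * A) = (1 + D) * A := by
  rw [Matrix.exp_conj' A D hA, NormedSpace.exp_eq_one_add_of_sq_eq_zero hD, ← mul_assoc,
    ← mul_assoc, Matrix.mul_nonsing_inv A ((Matrix.isUnit_iff_isUnit_det A).mp hA), one_mul]

lemma Nmat_sq : Nmat ^ 2 = 0 := by
  ext i j
  fin_cases i <;> fin_cases j <;> simp [sq, Nmat]

lemma Gm_eq_one_add_smul_Nmat (t : ℝ) : Gm t = 1 + t • Nmat := by
  ext i j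
  fin_cases i <;> fin_cases j <;> simp [Gm, Nmat]

lemma Gm_mul_Gm (a b : ℝ) : Gm a * Gm b = Gm (a + b) := by
  simp [Gm, add_comm]

lemma Gm_mulVec_zero (t : ℝ) (u : Fin 2 → ℝ) : (Gm t *ᵥ u) 0 = u 0 + t * u 1 := by
  simp [Gm, mulVec, dotProduct, Fin.sum_univ_two]

lemma Gm_mulVec_one (t : ℝ) (u : Fin 2 → ℝ) : (Gm t *ᵥ u) 1 = u 1 := by
  simp [Gm, mulVec, dotProduct, Fin.sum_univ_two]

lemma bdiag_smul_Nmat_sq {M : ℕ} (c : Fin M → ℝ) : bdiag (fun i => c i • Nmat) ^ 2 = 0 := by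
  rw [bdiag, ← blockDiagonal_pow, Pi.pow_def]
  simp only [smul_pow, Nmat_sq, smul_zero]
  exact blockDiagonal_zero

lemma one_add_bdiag_smul_Nmat {M : ℕ} (c : Fin M → ℝ) :
    1 + bdiag (fun i => c i • Nmat) = bdiag (fun i => Gm (c i)) := by
  simp only [bdiag, Gm_eq_one_add_smul_Nmat, ← blockDiagonal_one, ← blockDiagonal_add]
  rfl

lemma blk_bdiag_mulVec {M : ℕ} (C : Fin M → Matrix (Fin 2) (Fin 2) ℝ) (v : Idx M → ℝ)
    (i : Fin M) : blk (bdiag C *ᵥ v) i = C i *ᵥ blk v i := by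
  ext p
  simp [blk, bdiag, mulVec, dotProduct, blockDiagonal_apply, Fintype.sum_prod_type]

lemma blk_mulVec_exp_smul_conj_bdiag {M : ℕ} {A : Matrix (Idx M) (Idx M) ℝ} (hA : IsUnit A)
    (lam : Fin M → ℝ) (s : ℝ) (x : Idx M → ℝ) (i : Fin M) :
    blk (A *ᵥ (exp (s • (A⁻¹ * bdiag (fun i => lam i • Nmat) * A)) *ᵥ x)) i =
      Gm (s * lam i) *ᵥ blk (A *ᵥ x) i := by
  have hconj : s • (A⁻¹ * bdiag (fun i => lam i • Nmat) * A) =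
      A⁻¹ * bdiag (fun i => (s * lam i) • Nmat) * A := by
    rw [← smul_mul_assoc, ← mul_smul_comm, bdiag, ← blockDiagonal_smul]
    simp only [bdiag, Pi.smul_def, smul_smul]
  rw [mulVec_mulVec, hconj, mul_exp_conj_of_sq_eq_zero hA (bdiag_smul_Nmat_sq _),
    one_add_bdiag_smul_Nmat, ← mulVec_mulVec, blk_bdiag_mulVec]

section Shear

variable {M : ℕ} [NeZero M] {A : Matrix (Idx M) (Idx M) ℝ} {lam : Fin M → ℝ} {s : ℝ}
  {x x' : Idx M → ℝ}

lemma t0P_eq_add_of_blk_eq_Gm (hG : ∀ i, blk (A *ᵥ x') i = Gm (s * lam i) *ᵥ blk (A *ᵥ x) i)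
    (hlam : lam 0 ≠ 0) (hv : blk (A *ᵥ x) 0 1 ≠ 0) : t0P A lam x' = s + t0P A lam x := by
  rw [t0P, t0P, hG 0, Gm_mulVec_zero, Gm_mulVec_one]
  field_simp
  ring

lemma invRepP_eq_of_blk_eq_Gm (hG : ∀ i, blk (A *ᵥ x') i = Gm (s * lam i) *ᵥ blk (A *ᵥ x) i)
    (hlam : lam 0 ≠ 0) (hv : blk (A *ᵥ x) 0 1 ≠ 0) : invRepP A lam x' = invRepP A lam x := by
  rw [invRepP, invRepP]
  congr 1
  ext i : 1
  split_ifs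
  · rw [hG 0, Gm_mulVec_one]
  · rw [hG i, mulVec_mulVec, Gm_mul_Gm, t0P_eq_add_of_blk_eq_Gm hG hlam hv]
    ring_nf

end Shear

/-- **Parabolic invariance of `invRep_p`.** With `x' = exp(sL)x`, `v' = Ax'`:
`v'ᵢ = G(sλᵢ)vᵢ` and `v'_{i,2} = v_{i,2}` for all `i`; in particular
`v'_{1,2} = v_{1,2} ≠ 0`, `v'_{1,1}/(λ₁v'_{1,2}) = s + v_{1,1}/(λ₁v_{1,2})`, and
`invRep_p(x') = invRep_p(x)`. -/
theorem stmt16 (M : ℕ) [NeZero M] (A : Matrix (Idx M) (Idx M) ℝ) (hA : IsUnit A)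
    (lam : Fin M → ℝ) (hlam : lam 0 ≠ 0)
    (L : Matrix (Idx M) (Idx M) ℝ)
    (hL : L = A⁻¹ * bdiag (fun i => lam i • Nmat) * A)
    (x : Idx M → ℝ) (hv : blk (A.mulVec x) 0 1 ≠ 0)
    (s : ℝ) (x' : Idx M → ℝ) (hx' : x' = (NormedSpace.exp (s • L)).mulVec x) :
    (∀ i : Fin M, blk (A.mulVec x') i = (Gm (s * lam i)).mulVec (blk (A.mulVec x) i)) ∧
      (∀ i : Fin M, blk (A.mulVec x') i 1 = blk (A.mulVec x) i 1) ∧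
      (blk (A.mulVec x') 0 1 = blk (A.mulVec x) 0 1 ∧ blk (A.mulVec x') 0 1 ≠ 0) ∧
      blk (A.mulVec x') 0 0 / (lam 0 * blk (A.mulVec x') 0 1) =
        s + blk (A.mulVec x) 0 0 / (lam 0 * blk (A.mulVec x) 0 1) ∧
      invRepP A lam x' = invRepP A lam x := by
  have hG : ∀ i, blk (A *ᵥ x') i = Gm (s * lam i) *ᵥ blk (A *ᵥ x) i := by
    rw [hx', hL]
    exact blk_mulVec_exp_smul_conj_bdiag hA lam s x
  have hsnd : ∀ i, blk (A *ᵥ x') i 1 = blk (A *ᵥ x) i 1 := fun i => by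
    rw [hG i, Gm_mulVec_one]
  exact ⟨hG, hsnd, ⟨hsnd 0, (hsnd 0).trans_ne hv⟩, t0P_eq_add_of_blk_eq_Gm hG hlam hv,
    invRepP_eq_of_blk_eq_Gm hG hlam hv⟩
end
end
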